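/- arXiv:2412.05645 — 10 statements merged into one kernel-verified Lean document; each statement's English description precedes it below -/
import Mathlib

section
/- Let λ ∈ [0,1] be irrational and let x, y be distinct elements of D. Then there exists a Jensen convex function f : D → ℝ such that f(λ·x + (1−λ)·y) > λ·f(x) + (1−λ)·f(y). -/
/-!
An additive map `X → ℝ` is automatically `ℚ`-homogeneous, so it satisfies Jensen's equation
and is in particular Jensen convex. For irrational `λ`, the numbers `1` and `λ` are linearly
independent over `ℚ`, so a `ℚ`-linear functional on `ℝ` can send `1` to `0` and `λ` to `1`.
Composed with an `ℝ`-linear functional taking the value `1` at `x - y`, it gives an additive `f`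
with `f(λx + (1-λ)y) = f(y) + 1` while `f(x) = f(y)`.
-/

noncomputable section

/-- The distance of a real number to the set of integers. -/
noncomputable def dZ (x : ℝ) : ℝ := ⨅ k : ℤ, |x - (k : ℝ)|

variable {X : Type*} [AddCommGroup X] [Module ℝ X]

/-- The difference set `D_Δ = {x - y : x, y ∈ D}`. -/
def diffSet (D : Set X) : Set X := {u | ∃ x ∈ D, ∃ y ∈ D, u = x - y}

/-- The half difference set `(1/2)·D_Δ`. -/
def halfDiff (D : Set X) : Set X := {u | ∃ x ∈ D, ∃ y ∈ D, u = (2⁻¹ : ℝ) • (x - y)}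

/-- `f` is `φ`-Jensen convex on `D`. -/
def JCW (D : Set X) (φ : X → ℝ) (f : X → ℝ) : Prop :=
  ∀ x ∈ D, ∀ y ∈ D,
    f ((2⁻¹ : ℝ) • (x + y)) ≤ 2⁻¹ * f x + 2⁻¹ * f y + φ ((2⁻¹ : ℝ) • (x - y))

/-- `φ` is an admissible error function on `(1/2)·D_Δ`:
it is even there, vanishes at `0`, and admits a `φ`-Jensen convex function. -/
def Admissible (D : Set X) (φ : X → ℝ) : Prop :=
  (∀ u ∈ halfDiff D, φ (-u) = φ u) ∧ φ 0 = 0 ∧ ∃ f : X → ℝ, JCW D φ f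

/-- `φ*(u) = inf_{m ∈ ℕ, m ≥ 1} m² · φ(u/m)`, valued in `[-∞, ∞)` viewed inside `EReal`. -/
noncomputable def phiStar (φ : X → ℝ) (u : X) : EReal :=
  ⨅ m : ℕ+, ((((m : ℕ) : ℝ) ^ 2 * φ ((1 / ((m : ℕ) : ℝ)) • u) : ℝ) : EReal)

/-- The real-valued version of `φ*` (equal to `φ*` wherever `φ*` is finite). -/
noncomputable def phiStarR (φ : X → ℝ) (u : X) : ℝ := (phiStar φ u).toReal

/-- The extended error function
`E[φ](λ,u) = sup { f(λx+(1-λ)y) - λf(x) - (1-λ)f(y) : f φ-Jensen convex, x,y ∈ D, x-y = u }`. -/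
noncomputable def Eerr (D : Set X) (φ : X → ℝ) (l : ℝ) (u : X) : EReal :=
  sSup {c : EReal | ∃ f : X → ℝ, JCW D φ f ∧ ∃ x ∈ D, ∃ y ∈ D, x - y = u ∧
    c = ((f (l • x + (1 - l) • y) - l * f x - (1 - l) * f y : ℝ) : EReal)}

lemma exists_ratLinearMap_one_eq_zero_of_irrational {l : ℝ} (hl : Irrational l) :
    ∃ a : ℝ →ₗ[ℚ] ℝ, a 1 = 0 ∧ a l = 1 := by
  have hl_notMem : l ∉ ℚ ∙ (1 : ℝ) := by
    intro hmem
    obtain ⟨q, hq⟩ := Submodule.mem_span_singleton.1 hmem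
    exact hl ⟨q, by simpa [Rat.smul_def] using hq⟩
  obtain ⟨a, ha, hal⟩ := LinearMap.exists_extend_of_notMem (0 : (ℚ ∙ (1 : ℝ)) →ₗ[ℚ] ℝ)
    hl_notMem 1
  exact ⟨a, congr($ha ⟨1, Submodule.mem_span_singleton_self 1⟩), hal⟩

lemma exists_addMonoidHom_eq_zero_smul_eq_one {u : X} (hu : u ≠ 0) {l : ℝ} (hl : Irrational l) :
    ∃ f : X →+ ℝ, f u = 0 ∧ f (l • u) = 1 := by
  obtain ⟨g, -, hgu⟩ := LinearMap.exists_extend_of_notMem (0 : (⊥ : Submodule ℝ X) →ₗ[ℝ] ℝ)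
    (by simpa using hu) 1
  obtain ⟨a, ha1, hal⟩ := exists_ratLinearMap_one_eq_zero_of_irrational hl
  refine ⟨a.toAddMonoidHom.comp g.toAddMonoidHom, ?_, ?_⟩
  · simp [hgu, ha1]
  · simp [hgu, hal]

lemma AddMonoidHom.map_inv_two_smul_add (f : X →+ ℝ) (a b : X) :
    f ((2⁻¹ : ℝ) • (a + b)) = 2⁻¹ * f a + 2⁻¹ * f b := by
  have h := map_inv_natCast_smul f ℝ ℝ 2 (a + b)
  push_cast at h
  rw [h, map_add, smul_eq_mul]
  ring

theorem stmt0_general {X : Type*} [AddCommGroup X] [Module ℝ X] (D : Set X)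
    (l : ℝ)
    (hirr : Irrational l) {x y : X} (hxy : x ≠ y) :
    ∃ f : X → ℝ,
      (∀ a ∈ D, ∀ b ∈ D, f ((2⁻¹ : ℝ) • (a + b)) ≤ 2⁻¹ * f a + 2⁻¹ * f b) ∧
      l * f x + (1 - l) * f y < f (l • x + (1 - l) • y) := by
  obtain ⟨f, hf_sub, hf_smul⟩ := exists_addMonoidHom_eq_zero_smul_eq_one (sub_ne_zero.2 hxy) hirr
  refine ⟨f, fun a _ b _ => (f.map_inv_two_smul_add a b).le, ?_⟩
  have hfx : f x = f y := by simpa [sub_eq_zero] using hf_sub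
  have hcomb : l • x + (1 - l) • y = y + l • (x - y) := by module
  rw [hcomb, map_add, hf_smul, hfx]
  linarith

/-- For irrational `λ ∈ [0,1]` and distinct `x, y ∈ D`, there is a Jensen
convex function `f` on `D` with `f(λx+(1-λ)y) > λ f(x) + (1-λ) f(y)`. -/
theorem stmt0 {X : Type*} [AddCommGroup X] [Module ℝ X] (D : Set X)
    (hD : Convex ℝ D) (hne : D.Nonempty) (l : ℝ) (hl : l ∈ Set.Icc (0 : ℝ) 1)
    (hirr : Irrational l) {x y : X} (hx : x ∈ D) (hy : y ∈ D) (hxy : x ≠ y) :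
    ∃ f : X → ℝ,
      (∀ a ∈ D, ∀ b ∈ D, f ((2⁻¹ : ℝ) • (a + b)) ≤ 2⁻¹ * f a + 2⁻¹ * f b) ∧
      l * f x + (1 - l) * f y < f (l • x + (1 - l) • y) :=
  stmt0_general D l hirr hxy
end
end

section
/- Let ψ : [0, 1/2] → ℝ be bounded and define T_ψ : [0,1] → ℝ by T_ψ(λ) := ∑_{k=0}^∞ 2^{−k}·ψ(d_ℤ(2^k·λ)) (the series converges since its terms are bounded by 2^{−k}·‖ψ‖_∞). Then f = T_ψ is the unique bounded function f : [0,1] → ℝ satisfying f(0) = f(1) together with the functional equation: f(λ) = (1/2)·f(2λ) + ψ(λ) for λ ∈ [0, 1/2], and f(λ) = (1/2)·f(2λ − 1) + ψ(1 − λ) for λ ∈ (1/2, 1]. -/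
/-!
Every term of the series satisfies the functional equation on its own: `dZ` is `1`-periodic,
even and the identity on `[0, 1/2]`, so `dZ (2 ^ (k + 1) * λ)` is `dZ (2 ^ k * 2λ)` and also
`dZ (2 ^ k * (2λ - 1))`, while the `k = 0` term is `ψ λ`, resp. `ψ (1 - λ)`. For uniqueness, the
difference `D` of two bounded solutions satisfies `|D λ| = |D μ| / 2` with `μ = 2λ` or
`μ = 2λ - 1` in `[0, 1]`, so its supremum `M` on `[0, 1]` satisfies `M ≤ M / 2`.
-/

noncomputable section

open Set Function

lemma dZ_eq_abs_sub_round (x : ℝ) : dZ x = |x - round x| :=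
  le_antisymm (ciInf_le ⟨0, by rintro _ ⟨k, rfl⟩; positivity⟩ (round x)) (le_ciInf (round_le x))

lemma dZ_mem_Icc (x : ℝ) : dZ x ∈ Icc (0 : ℝ) (1 / 2) := by
  rw [dZ_eq_abs_sub_round]
  exact ⟨abs_nonneg _, abs_sub_round x⟩

lemma dZ_periodic : Periodic dZ 1 := fun x => by
  simp [dZ_eq_abs_sub_round, round_add_one]

lemma dZ_neg_le (x : ℝ) : dZ (-x) ≤ dZ x := by
  rw [dZ_eq_abs_sub_round, dZ_eq_abs_sub_round]
  calc |-x - round (-x)| ≤ |-x - ((-round x : ℤ) : ℝ)| := round_le _ _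
    _ = |x - round x| := by rw [← abs_neg]; push_cast; ring_nf

lemma dZ_neg (x : ℝ) : dZ (-x) = dZ x :=
  le_antisymm (dZ_neg_le x) (by simpa using dZ_neg_le (-x))

lemma dZ_of_mem_Icc {x : ℝ} (hx : x ∈ Icc (0 : ℝ) (1 / 2)) : dZ x = x := by
  obtain ⟨hx0, hx1⟩ := hx
  rw [dZ_eq_abs_sub_round]
  refine le_antisymm ((round_le x 0).trans_eq (by simp [abs_of_nonneg hx0])) ?_
  rcases le_or_gt (round x) 0 with hk | hk
  · have : (round x : ℝ) ≤ 0 := by exact_mod_cast hk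
    exact le_abs.2 (Or.inl (by linarith))
  · have : (1 : ℝ) ≤ round x := by exact_mod_cast hk
    exact le_abs.2 (Or.inr (by linarith))

lemma dZ_of_mem_Ioc {x : ℝ} (hx : x ∈ Ioc (1 / 2 : ℝ) 1) : dZ x = 1 - x := by
  rw [← dZ_periodic.sub_eq, ← dZ_neg, neg_sub]
  exact dZ_of_mem_Icc ⟨by linarith [hx.2], by linarith [hx.1]⟩

/-- `T_ψ = dyadicSum (ψ ∘ dZ)`. -/
def dyadicSum (g : ℝ → ℝ) (x : ℝ) : ℝ := ∑' k : ℕ, (1 / 2 : ℝ) ^ k * g (2 ^ k * x)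

section DyadicSum

variable {g : ℝ → ℝ} {C : ℝ}

lemma norm_half_pow_mul_le (hg : ∀ x, |g x| ≤ C) (x : ℝ) (k : ℕ) :
    ‖(1 / 2 : ℝ) ^ k * g (2 ^ k * x)‖ ≤ (1 / 2) ^ k * C := by
  rw [Real.norm_eq_abs, abs_mul, abs_of_nonneg (by positivity)]
  exact mul_le_mul_of_nonneg_left (hg _) (by positivity)

lemma summable_dyadicSum (hg : ∀ x, |g x| ≤ C) (x : ℝ) :
    Summable fun k : ℕ => (1 / 2 : ℝ) ^ k * g (2 ^ k * x) :=
  (summable_geometric_two.mul_right C).of_norm_bounded (norm_half_pow_mul_le hg x)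

lemma abs_dyadicSum_le (hg : ∀ x, |g x| ≤ C) (x : ℝ) : |dyadicSum g x| ≤ 2 * C := by
  calc |dyadicSum g x| ≤ ∑' k : ℕ, (1 / 2 : ℝ) ^ k * C :=
        tsum_of_norm_bounded (summable_geometric_two.mul_right C).hasSum
          (norm_half_pow_mul_le hg x)
    _ = 2 * C := by rw [tsum_mul_right, tsum_geometric_two]

lemma dyadicSum_eq_add (hg : ∀ x, |g x| ≤ C) (x : ℝ) :
    dyadicSum g x = g x + 2⁻¹ * dyadicSum g (2 * x) := by
  have hshift (k : ℕ) : (1 / 2 : ℝ) ^ (k + 1) * g (2 ^ (k + 1) * x)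
      = 2⁻¹ * ((1 / 2 : ℝ) ^ k * g (2 ^ k * (2 * x))) := by
    rw [show (2 : ℝ) ^ (k + 1) * x = 2 ^ k * (2 * x) by ring]
    ring
  rw [dyadicSum, (summable_dyadicSum hg x).tsum_eq_zero_add]
  simp only [hshift, tsum_mul_left, pow_zero, one_mul, dyadicSum]

lemma Function.Periodic.dyadicSum (hg : Periodic g 1) : Periodic (dyadicSum g) 1 := fun x => by
  refine tsum_congr fun k => ?_
  have h : (2 : ℝ) ^ k * (x + 1) = 2 ^ k * x + ((2 ^ k : ℕ) : ℝ) * 1 := by push_cast; ring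
  rw [h, hg.nat_mul]

end DyadicSum

lemma eqOn_zero_of_abs_le_mul {α : Type*} {D : α → ℝ} {s : Set α} {c : ℝ} (hc0 : 0 ≤ c)
    (hc : c < 1) (hbdd : BddAbove ((fun x => |D x|) '' s))
    (h : ∀ x ∈ s, ∃ y ∈ s, |D x| ≤ c * |D y|) : EqOn D 0 s := by
  intro x hx
  set M := sSup ((fun x => |D x|) '' s)
  have hM (y : α) (hy : y ∈ s) : |D y| ≤ M := le_csSup hbdd (mem_image_of_mem _ hy)
  have hMc : M ≤ c * M := by
    refine csSup_le ((nonempty_of_mem hx).image _) ?_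
    rintro _ ⟨y, hy, rfl⟩
    obtain ⟨z, hz, hyz⟩ := h y hy
    exact hyz.trans (mul_le_mul_of_nonneg_left (hM z hz) hc0)
  have hM0 : M ≤ 0 := by nlinarith [abs_nonneg (D x), hM x hx]
  exact abs_nonpos_iff.mp ((hM x hx).trans hM0)

def SolvesDyadicEq (ψ f : ℝ → ℝ) : Prop :=
  (∀ l ∈ Icc (0 : ℝ) (1 / 2), f l = 2⁻¹ * f (2 * l) + ψ l) ∧
    ∀ l ∈ Ioc (1 / 2 : ℝ) 1, f l = 2⁻¹ * f (2 * l - 1) + ψ (1 - l)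

lemma solvesDyadicEq_dyadicSum {ψ : ℝ → ℝ} {C : ℝ} (hψ : ∀ x, |ψ (dZ x)| ≤ C) :
    SolvesDyadicEq ψ (dyadicSum fun x => ψ (dZ x)) := by
  have hper : Periodic (dyadicSum fun x => ψ (dZ x)) 1 := (dZ_periodic.comp ψ).dyadicSum
  refine ⟨fun l hl => ?_, fun l hl => ?_⟩
  · rw [dyadicSum_eq_add hψ, dZ_of_mem_Icc hl, add_comm]
  · rw [dyadicSum_eq_add hψ, dZ_of_mem_Ioc hl, add_comm, ← hper.sub_eq]

lemma SolvesDyadicEq.exists_sub_eq_half_sub {ψ f g : ℝ → ℝ} (hf : SolvesDyadicEq ψ f)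
    (hg : SolvesDyadicEq ψ g) {x : ℝ} (hx : x ∈ Icc (0 : ℝ) 1) :
    ∃ y ∈ Icc (0 : ℝ) 1, f x - g x = 2⁻¹ * (f y - g y) := by
  rcases le_or_gt x (1 / 2) with hx2 | hx2
  · refine ⟨2 * x, ⟨by linarith [hx.1], by linarith⟩, ?_⟩
    rw [hf.1 x ⟨hx.1, hx2⟩, hg.1 x ⟨hx.1, hx2⟩]
    ring
  · refine ⟨2 * x - 1, ⟨by linarith, by linarith [hx.2]⟩, ?_⟩
    rw [hf.2 x ⟨hx2, hx.2⟩, hg.2 x ⟨hx2, hx.2⟩]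
    ring

lemma SolvesDyadicEq.eqOn {ψ f g : ℝ → ℝ} (hf : SolvesDyadicEq ψ f) (hg : SolvesDyadicEq ψ g)
    (hfb : ∃ C, ∀ l ∈ Icc (0 : ℝ) 1, |f l| ≤ C) (hgb : ∃ C, ∀ l ∈ Icc (0 : ℝ) 1, |g l| ≤ C) :
    EqOn f g (Icc 0 1) := by
  obtain ⟨Cf, hCf⟩ := hfb
  obtain ⟨Cg, hCg⟩ := hgb
  have hbdd : BddAbove ((fun x => |(f - g) x|) '' Icc 0 1) := by
    refine ⟨Cf + Cg, ?_⟩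
    rintro _ ⟨x, hx, rfl⟩
    exact (abs_sub _ _).trans (add_le_add (hCf x hx) (hCg x hx))
  have hcontr (x : ℝ) (hx : x ∈ Icc (0 : ℝ) 1) :
      ∃ y ∈ Icc (0 : ℝ) 1, |(f - g) x| ≤ 2⁻¹ * |(f - g) y| := by
    obtain ⟨y, hy, hxy⟩ := hf.exists_sub_eq_half_sub hg hx
    refine ⟨y, hy, le_of_eq ?_⟩
    rw [Pi.sub_apply, Pi.sub_apply, hxy, abs_mul, abs_of_pos (by norm_num)]
  exact fun x hx =>
    sub_eq_zero.mp (eqOn_zero_of_abs_le_mul (by norm_num) (by norm_num) hbdd hcontr hx)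

/-- the Takagi-type function `T_ψ` is the unique bounded solution with
`f(0)=f(1)` of the dyadic functional equation. -/
theorem stmt2 (ψ : ℝ → ℝ) (hb : ∃ C : ℝ, ∀ t ∈ Set.Icc (0 : ℝ) (1 / 2), |ψ t| ≤ C)
    (T : ℝ → ℝ) (hT : ∀ l, T l = ∑' k : ℕ, (1 / 2 : ℝ) ^ k * ψ (dZ (2 ^ k * l))) :
    ((∃ C : ℝ, ∀ l ∈ Set.Icc (0 : ℝ) 1, |T l| ≤ C) ∧ T 0 = T 1 ∧
      (∀ l ∈ Set.Icc (0 : ℝ) (1 / 2), T l = 2⁻¹ * T (2 * l) + ψ l) ∧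
      (∀ l ∈ Set.Ioc (1 / 2 : ℝ) 1, T l = 2⁻¹ * T (2 * l - 1) + ψ (1 - l))) ∧
    (∀ f : ℝ → ℝ, (∃ C : ℝ, ∀ l ∈ Set.Icc (0 : ℝ) 1, |f l| ≤ C) → f 0 = f 1 →
      (∀ l ∈ Set.Icc (0 : ℝ) (1 / 2), f l = 2⁻¹ * f (2 * l) + ψ l) →
      (∀ l ∈ Set.Ioc (1 / 2 : ℝ) 1, f l = 2⁻¹ * f (2 * l - 1) + ψ (1 - l)) →
      Set.EqOn f T (Set.Icc (0 : ℝ) 1)) := by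
  obtain ⟨C, hC⟩ := hb
  have hψ (x : ℝ) : |ψ (dZ x)| ≤ C := hC _ (dZ_mem_Icc x)
  obtain rfl : T = dyadicSum fun x => ψ (dZ x) := funext hT
  have hTb : ∃ C, ∀ l ∈ Icc (0 : ℝ) 1, |dyadicSum (fun x => ψ (dZ x)) l| ≤ C :=
    ⟨2 * C, fun l _ => abs_dyadicSum_le hψ l⟩
  have hsol := solvesDyadicEq_dyadicSum hψ
  refine ⟨⟨hTb, (dZ_periodic.comp ψ).dyadicSum.eq.symm, hsol.1, hsol.2⟩, ?_⟩
  exact fun f hfb _ hf₁ hf₂ => SolvesDyadicEq.eqOn ⟨hf₁, hf₂⟩ hsol hfb hTb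
end
end

section
/- For all λ ∈ [0,1], the identity ∑_{k=0}^∞ 2^{−k}·d_ℤ(2^k·λ)² = λ·(1 − λ) holds. -/
noncomputable section

lemma dZ_eq_min (x : ℝ) : dZ x = min (Int.fract x) (1 - Int.fract x) := by
  have hb : BddBelow (Set.range fun k : ℤ => |x - (k : ℝ)|) :=
    ⟨0, by rintro y ⟨k, rfl⟩; exact abs_nonneg _⟩
  apply le_antisymm
  · apply le_min
    · calc dZ x ≤ |x - ((⌊x⌋ : ℤ) : ℝ)| := ciInf_le hb ⌊x⌋
        _ = Int.fract x := by
            rw [Int.self_sub_floor, Int.abs_fract]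
    · calc dZ x ≤ |x - ((⌊x⌋ + 1 : ℤ) : ℝ)| := ciInf_le hb _
        _ = 1 - Int.fract x := by
            have h := Int.fract_lt_one x
            have hf : x - ⌊x⌋ = Int.fract x := Int.self_sub_floor x
            rw [abs_sub_comm, abs_of_nonneg (by push_cast; linarith)]
            push_cast
            linarith
  · apply le_ciInf
    intro k
    rcases le_or_gt k ⌊x⌋ with h | h
    · have : (k : ℝ) ≤ ⌊x⌋ := by exact_mod_cast h
      have hf : x - ⌊x⌋ = Int.fract x := Int.self_sub_floor x
      have h2 : Int.fract x ≤ x - k := by linarith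
      calc min (Int.fract x) (1 - Int.fract x) ≤ Int.fract x := min_le_left _ _
        _ ≤ x - k := h2
        _ ≤ |x - k| := le_abs_self _
    · have : (⌊x⌋ : ℝ) + 1 ≤ k := by exact_mod_cast h
      have hx := Int.fract_lt_one x
      have hf : x - ⌊x⌋ = Int.fract x := Int.self_sub_floor x
      have h2 : 1 - Int.fract x ≤ k - x := by linarith
      calc min (Int.fract x) (1 - Int.fract x) ≤ 1 - Int.fract x := min_le_right _ _
        _ ≤ k - x := h2
        _ ≤ |x - k| := by rw [abs_sub_comm]; exact le_abs_self _

/-- Auxiliary function. -/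
noncomputable def Fq (x : ℝ) : ℝ := Int.fract x * (1 - Int.fract x)

lemma fract_two_mul (x : ℝ) :
    Int.fract (2 * x) = if Int.fract x < 1/2 then 2 * Int.fract x else 2 * Int.fract x - 1 := by
  have h0 := Int.fract_nonneg x
  have h1 := Int.fract_lt_one x
  have hf : x - ⌊x⌋ = Int.fract x := Int.self_sub_floor x
  have : 2 * x = (2 * ⌊x⌋ : ℤ) + 2 * Int.fract x := by push_cast; linarith
  rw [this, Int.fract_intCast_add]
  split_ifs with h
  · rw [Int.fract_eq_self.2 ⟨by linarith, by linarith⟩]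
  · have : 2 * Int.fract x = (1 : ℤ) + (2 * Int.fract x - 1) := by push_cast; ring
    rw [this, Int.fract_intCast_add, Int.fract_eq_self.2 ⟨by linarith, by linarith⟩]
    push_cast; ring

lemma Fq_key (x : ℝ) : Fq x = (dZ x) ^ 2 + (1/2) * Fq (2 * x) := by
  have h0 := Int.fract_nonneg x
  have h1 := Int.fract_lt_one x
  rw [Fq, Fq, fract_two_mul, dZ_eq_min]
  split_ifs with h
  · rw [min_eq_left (by linarith)]; ring
  · rw [min_eq_right (by linarith)]; ring

lemma Fq_nonneg (x : ℝ) : 0 ≤ Fq x :=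
  mul_nonneg (Int.fract_nonneg x) (by linarith [Int.fract_lt_one x])

lemma Fq_le (x : ℝ) : Fq x ≤ 1/4 := by
  have := sq_nonneg (Int.fract x - 1/2)
  unfold Fq; nlinarith

lemma partial_sum (l : ℝ) (n : ℕ) :
    ∑ k ∈ Finset.range n, (1 / 2 : ℝ) ^ k * (dZ (2 ^ k * l)) ^ 2
      = Fq l - (1/2) ^ n * Fq (2 ^ n * l) := by
  induction n with
  | zero => simp
  | succ n ih =>
    rw [Finset.sum_range_succ, ih]
    have := Fq_key (2 ^ n * l)
    have h2 : 2 * (2 ^ n * l) = 2 ^ (n + 1) * l := by ring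
    rw [h2] at this
    rw [this]
    ring

/-- `∑_{k=0}^∞ 2^{-k} d_ℤ(2^k λ)² = λ(1-λ)` for `λ ∈ [0,1]`. -/
theorem stmt4 (l : ℝ) (hl : l ∈ Set.Icc (0 : ℝ) 1) :
    ∑' k : ℕ, (1 / 2 : ℝ) ^ k * (dZ (2 ^ k * l)) ^ 2 = l * (1 - l) := by
  have hF : Fq l = l * (1 - l) := by
    rcases eq_or_lt_of_le hl.2 with h | h
    · simp [Fq, h, Int.fract_one]
    · rw [Fq, Int.fract_eq_self.2 ⟨hl.1, h⟩]
  have hnonneg : ∀ k : ℕ, 0 ≤ (1 / 2 : ℝ) ^ k * (dZ (2 ^ k * l)) ^ 2 := fun k =>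
    mul_nonneg (by positivity) (sq_nonneg _)
  have hsum : HasSum (fun k : ℕ => (1 / 2 : ℝ) ^ k * (dZ (2 ^ k * l)) ^ 2) (l * (1 - l)) := by
    rw [hasSum_iff_tendsto_nat_of_nonneg hnonneg]
    have htend : Filter.Tendsto (fun n : ℕ => (1/2 : ℝ) ^ n * Fq (2 ^ n * l))
        Filter.atTop (nhds 0) := by
      apply squeeze_zero (fun n => mul_nonneg (by positivity) (Fq_nonneg _))
        (g := fun n : ℕ => (1/4 : ℝ) * (1/2) ^ n)
      · intro n
        have := Fq_le (2 ^ n * l)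
        have hp : (0:ℝ) ≤ (1/2:ℝ)^n := by positivity
        nlinarith
      · simpa using (tendsto_pow_atTop_nhds_zero_of_lt_one (by norm_num)
          (by norm_num : (1/2:ℝ) < 1)).const_mul (1/4 : ℝ)
    have : Filter.Tendsto (fun n : ℕ => Fq l - (1/2 : ℝ) ^ n * Fq (2 ^ n * l))
        Filter.atTop (nhds (Fq l - 0)) := Filter.Tendsto.const_sub _ htend
    rw [sub_zero, hF] at this
    refine this.congr fun n => ?_
    rw [partial_sum, hF]
  exact hsum.tsum_eq
end
end

section
/- Let n ≥ 3 be an odd integer, let M_n denote the set of integers m with 1 ≤ m ≤ (n−1)/2 that are coprime to n, and let μ_n : M_n → M_n be defined by μ_n(m) := min(2m, n − 2m). Then for all m ∈ M_n and all k ≥ 1, the set ({2^k·m − i·n : i ∈ {0, …, 2^{k−1} − 1}} ∪ {i·n − 2^k·m : i ∈ {1, …, 2^{k−1}}}) ∩ M_n is exactly the singleton {μ_n^{∘k}(m)}, where μ_n^{∘k} denotes the k-fold iterate of μ_n. -/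
-- uniqueness helper: two numbers in [1,(N-1)/2] that are ±a mod N are equal
lemma key7 (N : ℤ) (hN : 3 ≤ N) (a x y : ℤ)
    (hx1 : 1 ≤ x) (hx2 : 2 * x ≤ N - 1) (hy1 : 1 ≤ y) (hy2 : 2 * y ≤ N - 1)
    (i j : ℤ) (hx : x = a - i * N ∨ x = i * N - a)
    (hy : y = a - j * N ∨ y = j * N - a) : x = y := by
  have hdiff : ∀ d : ℤ, d * N = x - y → x = y := by
    intro d hd
    rcases lt_trichotomy d 0 with h | h | h
    · nlinarith
    · simp [h] at hd; linarith
    · nlinarith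
  have hsum : ∀ d : ℤ, d * N = x + y → False := by
    intro d hd
    rcases lt_trichotomy d 0 with h | h | h
    · nlinarith
    · simp [h] at hd; linarith
    · nlinarith
  rcases hx with hx | hx <;> rcases hy with hy | hy
  · exact hdiff (j - i) (by rw [hx, hy]; ring)
  · exact absurd (hsum (j - i) (by rw [hx, hy]; ring)) (by simp)
  · exact absurd (hsum (i - j) (by rw [hx, hy]; ring)) (by simp)
  · exact hdiff (i - j) (by rw [hx, hy]; ring)

/-- for `m ∈ M_n` and `k ≥ 1`, the set
`({2^k m - i n : 0 ≤ i ≤ 2^{k-1}-1} ∪ {i n - 2^k m : 1 ≤ i ≤ 2^{k-1}}) ∩ M_n`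
is the singleton `{μ_n^{∘k}(m)}`. -/
theorem stmt7 (n : ℕ) (hn : 3 ≤ n) (hodd : Odd n) (m : ℤ)
    (hm : m ∈ {m : ℤ | 1 ≤ m ∧ 2 * m ≤ (n : ℤ) - 1 ∧ IsCoprime m (n : ℤ)})
    (k : ℕ) (hk : 1 ≤ k) :
    ({p : ℤ | ∃ i : ℤ, 0 ≤ i ∧ i ≤ 2 ^ (k - 1) - 1 ∧ p = 2 ^ k * m - i * n} ∪
      {p : ℤ | ∃ i : ℤ, 1 ≤ i ∧ i ≤ 2 ^ (k - 1) ∧ p = i * n - 2 ^ k * m}) ∩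
      {m : ℤ | 1 ≤ m ∧ 2 * m ≤ (n : ℤ) - 1 ∧ IsCoprime m (n : ℤ)} =
    {(fun m : ℤ => min (2 * m) ((n : ℤ) - 2 * m))^[k] m} := by
  obtain ⟨hm1, hm2, hm3⟩ := hm
  set μ : ℤ → ℤ := fun m : ℤ => min (2 * m) ((n : ℤ) - 2 * m) with hμ
  have hN : (3 : ℤ) ≤ (n : ℤ) := by exact_mod_cast hn
  have hnodd : ¬ (2 : ℤ) ∣ (n : ℤ) := by
    rcases hodd with ⟨t, ht⟩
    intro ⟨s, hs⟩
    omega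
  have hcop2 : IsCoprime (2 : ℤ) (n : ℤ) := by
    rcases hodd with ⟨t, ht⟩
    exact ⟨-(t : ℤ), 1, by push_cast [ht]; ring⟩
  -- μ preserves membership in M
  have hpres : ∀ x : ℤ, (1 ≤ x ∧ 2 * x ≤ (n : ℤ) - 1 ∧ IsCoprime x (n : ℤ)) →
      (1 ≤ μ x ∧ 2 * μ x ≤ (n : ℤ) - 1 ∧ IsCoprime (μ x) (n : ℤ)) := by
    intro x ⟨h1, h2, h3⟩
    have hcop2x : IsCoprime (2 * x) (n : ℤ) := hcop2.mul_left h3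
    have hne : (2 : ℤ) * x ≠ (n : ℤ) - 2 * x := by
      intro h
      exact hnodd ⟨2 * x, by linarith⟩
    rcases le_or_gt (2 * x) ((n : ℤ) - 2 * x) with h | h
    · have hmin : μ x = 2 * x := min_eq_left h
      refine ⟨by omega, ?_, by rw [hmin]; exact hcop2x⟩
      rw [hmin]
      have : 2 * (2 * x) ≠ (n : ℤ) := fun hc => hnodd ⟨2 * x, by linarith⟩
      omega
    · have hmin : μ x = (n : ℤ) - 2 * x := min_eq_right h.le
      refine ⟨by omega, by omega, ?_⟩
      rw [hmin]
      have := (hcop2x.neg_left).add_mul_left_left 1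
      simpa [sub_eq_neg_add] using this
  have hM : ∀ t : ℕ, 1 ≤ μ^[t] m ∧ 2 * μ^[t] m ≤ (n : ℤ) - 1 ∧ IsCoprime (μ^[t] m) (n : ℤ) := by
    intro t
    induction t with
    | zero => exact ⟨hm1, hm2, hm3⟩
    | succ t ih => rw [Function.iterate_succ_apply']; exact hpres _ ih
  -- representation lemma
  have hrep : ∀ j : ℕ, ∃ i : ℤ,
      (0 ≤ i ∧ i ≤ 2 ^ j - 1 ∧ μ^[j + 1] m = 2 ^ (j + 1) * m - i * n) ∨
      (1 ≤ i ∧ i ≤ 2 ^ j ∧ μ^[j + 1] m = i * n - 2 ^ (j + 1) * m) := by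
    intro j
    induction j with
    | zero =>
      rcases le_or_gt (2 * m) ((n : ℤ) - 2 * m) with h | h
      · exact ⟨0, Or.inl ⟨le_refl 0, by norm_num, by
          simp [Function.iterate_one, hμ, min_eq_left h]⟩⟩
      · exact ⟨1, Or.inr ⟨le_refl 1, by norm_num, by
          simp [Function.iterate_one, hμ, min_eq_right h.le]⟩⟩
    | succ j ih =>
      obtain ⟨i, hi⟩ := ih
      set u := μ^[j + 1] m with hu
      have hstep : μ^[j + 1 + 1] m = μ u := by rw [Function.iterate_succ_apply']
      have hpow : (2 : ℤ) ^ (j + 1 + 1) = 2 * 2 ^ (j + 1) := by ring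
      have hpow' : (2 : ℤ) ^ (j + 1) = 2 * 2 ^ j := by ring
      have hpos : (1 : ℤ) ≤ 2 ^ j := by exact_mod_cast Nat.one_le_two_pow
      rcases le_or_gt (2 * u) ((n : ℤ) - 2 * u) with h | h
      · have hmin : μ u = 2 * u := min_eq_left h
        rcases hi with ⟨h1, h2, h3⟩ | ⟨h1, h2, h3⟩
        · exact ⟨2 * i, Or.inl ⟨by linarith, by rw [hpow']; linarith, by
            rw [hstep, hmin, h3, hpow]; ring⟩⟩
        · exact ⟨2 * i, Or.inr ⟨by linarith, by rw [hpow']; linarith, by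
            rw [hstep, hmin, h3, hpow]; ring⟩⟩
      · have hmin : μ u = (n : ℤ) - 2 * u := min_eq_right h.le
        rcases hi with ⟨h1, h2, h3⟩ | ⟨h1, h2, h3⟩
        · exact ⟨2 * i + 1, Or.inr ⟨by linarith, by rw [hpow']; linarith, by
            rw [hstep, hmin, h3, hpow]; ring⟩⟩
        · exact ⟨2 * i - 1, Or.inl ⟨by linarith, by rw [hpow']; linarith, by
            rw [hstep, hmin, h3, hpow]; ring⟩⟩
  obtain ⟨j, rfl⟩ : ∃ j, k = j + 1 := ⟨k - 1, by omega⟩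
  have hj1 : j + 1 - 1 = j := by omega
  obtain ⟨i₀, hi₀⟩ := hrep j
  obtain ⟨hμ1, hμ2, hμ3⟩ := hM (j + 1)
  ext x
  simp only [Set.mem_inter_iff, Set.mem_union, Set.mem_setOf_eq, Set.mem_singleton_iff, hj1]
  constructor
  · rintro ⟨hx, hx1, hx2, hx3⟩
    have hxrep : ∃ i : ℤ, x = 2 ^ (j + 1) * m - i * n ∨ x = i * n - 2 ^ (j + 1) * m := by
      rcases hx with ⟨i, _, _, h⟩ | ⟨i, _, _, h⟩
      exacts [⟨i, Or.inl h⟩, ⟨i, Or.inr h⟩]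
    obtain ⟨i, hi⟩ := hxrep
    have hμrep : μ^[j + 1] m = 2 ^ (j + 1) * m - i₀ * n ∨
        μ^[j + 1] m = i₀ * n - 2 ^ (j + 1) * m := by
      rcases hi₀ with ⟨_, _, h⟩ | ⟨_, _, h⟩
      exacts [Or.inl h, Or.inr h]
    exact key7 (n : ℤ) hN (2 ^ (j + 1) * m) x (μ^[j + 1] m) hx1 hx2 hμ1 hμ2 i i₀ hi hμrep
  · rintro rfl
    refine ⟨?_, hμ1, hμ2, hμ3⟩
    rcases hi₀ with ⟨h1, h2, h3⟩ | ⟨h1, h2, h3⟩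
    · exact Or.inl ⟨i₀, h1, h2, h3⟩
    · exact Or.inr ⟨i₀, h1, h2, h3⟩
end

section
/- Let φ be an admissible error function and let f : D → ℝ be φ-Jensen convex. Then for all positive integers n, k and all x, y ∈ D: f((n·x + k·y)/(n + k)) ≤ (n/(n+k))·f(x) + (k/(n+k))·f(y) + k·n·φ((x − y)/(n + k)). -/
noncomputable section

variable {X : Type*} [AddCommGroup X] [Module ℝ X]

/-!
Put `N = n + k`, `u = (x - y) / N` and `p j = y + j • u`, so that `p 0 = y`, `p N = x` and
`p n = (n • x + k • y) / N`. Applying Jensen convexity to `p j` and `p (j + 2)` shows that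
`a j = f (p j)` has second differences at least `-2 φ u`. Removing from `N • a` the chord through
its endpoints and the parabola `N j (N - j) φ u` leaves a discretely convex sequence vanishing at
`0` and `N`, hence nonpositive; at `j = n` this is the claim.
-/

section DiscreteConvexity

variable {N : ℕ} {b : ℕ → ℝ}

/-- With `b 0 = 0`, discrete convexity says that the slopes `b j / j` are nondecreasing. -/
theorem succ_mul_le_mul_succ_of_two_mul_le (h0 : b 0 = 0)
    (hb : ∀ j, j + 2 ≤ N → 2 * b (j + 1) ≤ b j + b (j + 2)) :
    ∀ j, j + 1 ≤ N → (j + 1 : ℝ) * b j ≤ j * b (j + 1) := by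
  intro j
  induction j with
  | zero => intro _; simp [h0]
  | succ j ih =>
    intro hj
    have hprev := ih (by omega)
    have hconv := hb j hj
    push_cast
    nlinarith

theorem mul_le_mul_of_two_mul_le (h0 : b 0 = 0)
    (hb : ∀ j, j + 2 ≤ N → 2 * b (j + 1) ≤ b j + b (j + 2)) {j m : ℕ} (hjm : j ≤ m)
    (hm : m ≤ N) : (m : ℝ) * b j ≤ j * b m := by
  induction m, hjm using Nat.le_induction with
  | base => rw [mul_comm]
  | succ m hjm ih =>
    have hprev := ih (by omega)
    have hstep := succ_mul_le_mul_succ_of_two_mul_le h0 hb m hm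
    rcases Nat.eq_zero_or_pos m with rfl | hm0
    · obtain rfl : j = 0 := by omega
      simp [h0]
    · have hm0' : (0 : ℝ) < m := by exact_mod_cast hm0
      have hj0 : (0 : ℝ) ≤ j := by positivity
      push_cast
      nlinarith [mul_le_mul_of_nonneg_left hstep hj0, mul_le_mul_of_nonneg_left hprev
        (by positivity : (0 : ℝ) ≤ m + 1)]

theorem nonpos_of_two_mul_le (h0 : b 0 = 0) (hN : b N = 0)
    (hb : ∀ j, j + 2 ≤ N → 2 * b (j + 1) ≤ b j + b (j + 2)) {j : ℕ} (hj : j ≤ N) :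
    b j ≤ 0 := by
  rcases Nat.eq_zero_or_pos N with rfl | hN0
  · obtain rfl : j = 0 := by omega
    exact h0.le
  · have h := mul_le_mul_of_two_mul_le h0 hb hj le_rfl
    rw [hN, mul_zero] at h
    exact nonpos_of_mul_nonpos_right h (by exact_mod_cast hN0)

theorem mul_le_interpolation_of_second_diff (ε : ℝ) {a : ℕ → ℝ}
    (ha : ∀ j, j + 2 ≤ N → 2 * a (j + 1) ≤ a j + a (j + 2) + 2 * ε) {j : ℕ} (hj : j ≤ N) :
    N * a j ≤ (N - j) * a 0 + j * a N + N * j * (N - j) * ε := by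
  set c : ℕ → ℝ := fun i => N * a i - (N - i) * a 0 - i * a N - N * i * (N - i) * ε with hc
  have hc_conv : ∀ i, i + 2 ≤ N → 2 * c (i + 1) ≤ c i + c (i + 2) := by
    intro i hi
    have key : c i + c (i + 2) - 2 * c (i + 1) =
        N * (a i + a (i + 2) + 2 * ε - 2 * a (i + 1)) := by
      simp only [hc]; push_cast; ring
    have := mul_nonneg (Nat.cast_nonneg N) (sub_nonneg.mpr (ha i hi))
    linarith
  have := nonpos_of_two_mul_le (by simp [hc]) (by simp [hc]) hc_conv hj
  simp only [hc] at this
  linarith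

end DiscreteConvexity

theorem JCW.two_mul_le {D : Set X} {φ f : X → ℝ} (hf : JCW D φ f) {z v : X} (hz : z ∈ D)
    (hzv : z + (2 : ℝ) • v ∈ D) : 2 * f (z + v) ≤ f z + f (z + (2 : ℝ) • v) + 2 * φ v := by
  have h := hf _ hzv _ hz
  have hmid : (2⁻¹ : ℝ) • (z + (2 : ℝ) • v + z) = z + v := by module
  have hhalf : (2⁻¹ : ℝ) • (z + (2 : ℝ) • v - z) = v := by module
  rw [hmid, hhalf] at h
  linarith

theorem stmt10_general {X : Type*} [AddCommGroup X] [Module ℝ X] (D : Set X)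
    (hD : Convex ℝ D) (φ : X → ℝ)
    (f : X → ℝ) (hf : JCW D φ f) (n k : ℕ) (hn : 0 < n)
    {x y : X} (hx : x ∈ D) (hy : y ∈ D) :
    f (((n : ℝ) / ((n : ℝ) + (k : ℝ))) • x + ((k : ℝ) / ((n : ℝ) + (k : ℝ))) • y) ≤
      (n : ℝ) / ((n : ℝ) + (k : ℝ)) * f x + (k : ℝ) / ((n : ℝ) + (k : ℝ)) * f y +
        (k : ℝ) * (n : ℝ) * φ ((1 / ((n : ℝ) + (k : ℝ))) • (x - y)) := by
  set N : ℕ := n + k with hN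
  have hNcast : (N : ℝ) = n + k := by push_cast [hN]; ring
  have hN0 : (0 : ℝ) < N := by positivity
  rw [← hNcast]
  set u : X := (1 / (N : ℝ)) • (x - y)
  set p : ℕ → X := fun j => y + ((j : ℝ) / N) • (x - y) with hp
  have hp_mem : ∀ j ≤ N, p j ∈ D := fun j hj =>
    hD.add_smul_sub_mem hy hx ⟨by positivity, div_le_one_of_le₀ (by exact_mod_cast hj) hN0.le⟩
  have hp_succ : ∀ j, p (j + 1) = p j + u := fun j => by simp only [hp, u]; push_cast; module
  have hp_two : ∀ j, p (j + 2) = p j + (2 : ℝ) • u := fun j => by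
    simp only [hp, u]; push_cast; module
  have hseq := mul_le_interpolation_of_second_diff (N := N) (φ u) (a := f ∘ p)
    (fun j hj => by
      have h := hf.two_mul_le (hp_mem j (by omega)) (hp_two j ▸ hp_mem (j + 2) hj)
      rw [← hp_succ, ← hp_two] at h
      exact h)
    (Nat.le_add_right n k)
  have hp0 : p 0 = y := by simp [hp]
  have hpN : p N = x := by simp [hp, hN0.ne']
  have hpn : p n = (n / (N : ℝ)) • x + (k / (N : ℝ)) • y := by
    simp only [hp]
    match_scalars <;> field_simp
    linarith
  simp only [Function.comp, hp0, hpN, hpn] at hseq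
  have hNk : (N : ℝ) - n = k := by linarith
  rw [hNk] at hseq
  have hrhs : (N : ℝ) * (n / N * f x + k / N * f y + k * n * φ u) =
      k * f y + n * f x + N * n * k * φ u := by
    field_simp
    ring
  exact le_of_mul_le_mul_left (hrhs ▸ hseq) hN0

/-- a `φ`-Jensen convex function satisfies the rational convexity inequality
with error term `k·n·φ((x-y)/(n+k))`. -/
theorem stmt10 {X : Type*} [AddCommGroup X] [Module ℝ X] (D : Set X)
    (hD : Convex ℝ D) (hne : D.Nonempty) (φ : X → ℝ) (hφ : Admissible D φ)
    (f : X → ℝ) (hf : JCW D φ f) (n k : ℕ) (hn : 0 < n) (hk : 0 < k)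
    {x y : X} (hx : x ∈ D) (hy : y ∈ D) :
    f (((n : ℝ) / ((n : ℝ) + (k : ℝ))) • x + ((k : ℝ) / ((n : ℝ) + (k : ℝ))) • y) ≤
      (n : ℝ) / ((n : ℝ) + (k : ℝ)) * f x + (k : ℝ) / ((n : ℝ) + (k : ℝ)) * f y +
        (k : ℝ) * (n : ℝ) * φ ((1 / ((n : ℝ) + (k : ℝ))) • (x - y)) :=
  stmt10_general D hD φ f hf n k hn hx hy
end
end

section
/- Let φ be an admissible error function. Then for every φ-Jensen convex function f : D → ℝ, all positive integers n, k, and all x, y ∈ D: f((n·x + k·y)/(n + k)) ≤ (n/(n+k))·f(x) + (k/(n+k))·f(y) + k·n·φ*((x − y)/(n + k)). In particular, φ* is real-valued (never −∞), every φ-Jensen convex function is also φ*-Jensen convex, and φ* is an admissible error function. -/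
noncomputable section

variable {X : Type*} [AddCommGroup X] [Module ℝ X]

/-! Along the grid `z j = y + (j / N) • (x - y)`, `0 ≤ j ≤ N = n + k`, Jensen's inequality at
consecutive points says that `d j = f (z j) - (affine interpolant) - j (N - j) φ ((x - y) / N)` is
discretely convex; it vanishes at `j = 0` and `j = N`, so it is nonpositive, and `j = n` is the
inequality with `φ`. Running this on the grid refined `m` times turns the error term into
`k n m² φ ((x - y) / (m N))`, and the infimum over `m` gives `φ*`. For `n = k = 1` the
inequality is the `φ*`-Jensen inequality, and it bounds `φ*` from below on `(1/2)·D_Δ`. -/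

theorem le_zero_of_two_mul_le_add {N : ℕ} {d : ℕ → ℝ} (h0 : d 0 ≤ 0) (hN : d N ≤ 0)
    (hconv : ∀ j, j + 2 ≤ N → 2 * d (j + 1) ≤ d j + d (j + 2)) :
    ∀ j ≤ N, d j ≤ 0 := by
  classical
  have hmax : ∃ m ≤ N, ∀ i ≤ N, d i ≤ d m := by
    obtain ⟨m, hm, hle⟩ := (Finset.range (N + 1)).exists_max_image d ⟨0, by simp⟩
    exact ⟨m, by simpa [Nat.lt_succ_iff] using hm,
      fun i hi => hle i (by simpa [Nat.lt_succ_iff] using hi)⟩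
  -- Take the first maximiser: if its value were positive, it would be an interior point
  -- strictly above its left neighbour, contradicting discrete convexity.
  obtain ⟨hmN, hle⟩ := Nat.find_spec hmax
  suffices d (Nat.find hmax) ≤ 0 from fun j hj => (hle j hj).trans this
  by_contra! hpos
  obtain ⟨j, hj⟩ : ∃ j, Nat.find hmax = j + 1 :=
    Nat.exists_eq_succ_of_ne_zero fun h => by rw [h] at hpos; linarith
  have hjN : j + 2 ≤ N := by
    rcases hmN.lt_or_eq with h | h
    · omega
    · rw [h] at hpos; linarith
  have hprev : d j < d (j + 1) := by
    have := Nat.find_min hmax (show j < Nat.find hmax by omega)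
    push Not at this
    obtain ⟨i, hi, hlt⟩ := this (by omega)
    exact hj ▸ hlt.trans_le (hle i hi)
  rw [hj] at hle
  linarith [hconv j hjN, hle (j + 2) hjN]

theorem Convex.smul_mem_halfDiff {D : Set X} (hD : Convex ℝ D) {u : X} (hu : u ∈ halfDiff D)
    {t : ℝ} (h0 : 0 ≤ t) (h1 : t ≤ 1) : t • u ∈ halfDiff D := by
  obtain ⟨x, hx, y, hy, rfl⟩ := hu
  refine ⟨t • x + (1 - t) • y, hD hx hy h0 (by linarith) (by ring), y, hy, ?_⟩
  module

theorem phiStar_ne_top (φ : X → ℝ) (u : X) : phiStar φ u ≠ ⊤ :=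
  ne_top_of_le_ne_top (EReal.coe_ne_top _) (iInf_le _ 1)

theorem coe_phiStarR {φ : X → ℝ} {u : X} (h : phiStar φ u ≠ ⊥) :
    (phiStarR φ u : EReal) = phiStar φ u :=
  EReal.coe_toReal (phiStar_ne_top φ u) h

theorem phiStar_zero {φ : X → ℝ} (h : φ 0 = 0) : phiStar φ 0 = 0 := by
  simp [phiStar, h]

theorem phiStar_neg {D : Set X} (hD : Convex ℝ D) {φ : X → ℝ}
    (heven : ∀ u ∈ halfDiff D, φ (-u) = φ u) {u : X} (hu : u ∈ halfDiff D) :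
    phiStar φ (-u) = phiStar φ u := by
  refine iInf_congr fun m => ?_
  have hm : (1 : ℝ) ≤ ((m : ℕ) : ℝ) := Nat.one_le_cast.mpr m.pos
  rw [smul_neg, heven _ (hD.smul_mem_halfDiff hu (by positivity)
    ((div_le_one (by linarith)).mpr hm))]

namespace JCW

variable {D : Set X} {φ f : X → ℝ}

theorem apply_div_add_le (hD : Convex ℝ D) (hf : JCW D φ f) {n k : ℕ} (hnk : 0 < n + k)
    {x y : X} (hx : x ∈ D) (hy : y ∈ D) :
    f (((n : ℝ) / (n + k)) • x + ((k : ℝ) / (n + k)) • y) ≤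
      n / (n + k) * f x + k / (n + k) * f y + k * n * φ ((1 / ((n : ℝ) + k)) • (x - y)) := by
  set N : ℝ := n + k with hN
  have hN0 : 0 < N := by rw [hN]; exact_mod_cast hnk
  set u : X := (1 / N) • (x - y)
  set z : ℕ → X := fun j => y + (j : ℝ) • u with hz
  have hzD : ∀ j ≤ n + k, z j ∈ D := fun j hj => by
    have hj : (j : ℝ) / N ≤ 1 := (div_le_one hN0).mpr (by rw [hN]; exact_mod_cast hj)
    convert hD hx hy (by positivity) (sub_nonneg.mpr hj) (add_sub_cancel _ _) using 1
    simp only [hz, u]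
    module
  -- `j (N - j)` has second difference `-2`, which absorbs the `2 φ u` of Jensen's inequality.
  set d : ℕ → ℝ := fun j => f (z j) - f y - j / N * (f x - f y) - j * (N - j) * φ u with hd
  have hzN : z (n + k) = x := by
    simp only [hz, u, smul_smul, Nat.cast_add, ← hN]
    rw [mul_one_div_cancel hN0.ne', one_smul, add_sub_cancel]
  have hconv : ∀ j, j + 2 ≤ n + k → 2 * d (j + 1) ≤ d j + d (j + 2) := fun j hj => by
    have key := hf _ (hzD (j + 2) hj) _ (hzD j (by omega))
    have hmid : (2⁻¹ : ℝ) • (z (j + 2) + z j) = z (j + 1) := by simp only [hz]; push_cast; module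
    have hdiff : (2⁻¹ : ℝ) • (z (j + 2) - z j) = u := by simp only [hz]; push_cast; module
    rw [hmid, hdiff] at key
    simp only [hd]
    push_cast
    linear_combination 2 * key
  have hdn := le_zero_of_two_mul_le_add (d := d) (by simp [hd, hz])
    (by simp [hd, hzN, ← hN, hN0.ne']) hconv n (by omega)
  have hk : (k : ℝ) / N = 1 - n / N := by field_simp; rw [hN]; ring
  have hzn : ((n : ℝ) / N) • x + ((k : ℝ) / N) • y = z n := by
    simp only [hz, u, hk]
    module
  rw [hzn]
  linear_combination hdn - f y * hk - n * φ u * hN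

theorem apply_div_add_le_mul_sq (hD : Convex ℝ D) (hf : JCW D φ f) {n k : ℕ} (hnk : 0 < n + k)
    (m : ℕ+) {x y : X} (hx : x ∈ D) (hy : y ∈ D) :
    f (((n : ℝ) / (n + k)) • x + ((k : ℝ) / (n + k)) • y) ≤
      n / (n + k) * f x + k / (n + k) * f y +
        k * n * (((m : ℕ) : ℝ) ^ 2 * φ ((1 / ((m : ℕ) : ℝ)) • (1 / ((n : ℝ) + k)) • (x - y))) := by
  have hm : (0 : ℝ) < (m : ℕ) := by exact_mod_cast m.pos
  have H := hf.apply_div_add_le hD (n := m * n) (k := m * k)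
    (by rw [← mul_add]; exact mul_pos m.pos hnk) hx hy
  have hratio : ∀ i : ℕ, ((m * i : ℕ) : ℝ) / ((m * n : ℕ) + (m * k : ℕ)) = i / (n + k) := by
    intro i
    push_cast
    rw [← mul_add, mul_div_mul_left _ _ hm.ne']
  have hcoef : ((m * k : ℕ) : ℝ) * (m * n : ℕ) = k * n * ((m : ℕ) : ℝ) ^ 2 := by push_cast; ring
  have harg :
      1 / (((m * n : ℕ) : ℝ) + (m * k : ℕ)) = 1 / ((m : ℕ) : ℝ) * (1 / ((n : ℝ) + k)) := by
    push_cast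
    field_simp
  rw [hratio, hratio, hcoef, harg, ← smul_smul] at H
  linarith

theorem coe_le_phiStar (hD : Convex ℝ D) (hf : JCW D φ f) {n k : ℕ} (hn : 0 < n) (hk : 0 < k)
    {x y : X} (hx : x ∈ D) (hy : y ∈ D) :
    (((f (((n : ℝ) / (n + k)) • x + ((k : ℝ) / (n + k)) • y) -
        (n / (n + k) * f x + k / (n + k) * f y)) / (k * n) : ℝ) : EReal) ≤
      phiStar φ ((1 / ((n : ℝ) + k)) • (x - y)) := by
  have hkn : (0 : ℝ) < k * n := by positivity
  refine le_iInf fun m => EReal.coe_le_coe_iff.mpr ?_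
  rw [div_le_iff₀' hkn]
  linarith [hf.apply_div_add_le_mul_sq hD (by omega : 0 < n + k) m hx hy]

theorem phiStar_ne_bot (hD : Convex ℝ D) (hf : JCW D φ f) {n k : ℕ} (hn : 0 < n) (hk : 0 < k)
    {x y : X} (hx : x ∈ D) (hy : y ∈ D) :
    phiStar φ ((1 / ((n : ℝ) + k)) • (x - y)) ≠ ⊥ :=
  ne_bot_of_le_ne_bot (EReal.coe_ne_bot _) (hf.coe_le_phiStar hD hn hk hx hy)

theorem apply_div_add_le_phiStarR (hD : Convex ℝ D) (hf : JCW D φ f) {n k : ℕ} (hn : 0 < n)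
    (hk : 0 < k) {x y : X} (hx : x ∈ D) (hy : y ∈ D) :
    f (((n : ℝ) / (n + k)) • x + ((k : ℝ) / (n + k)) • y) ≤
      n / (n + k) * f x + k / (n + k) * f y +
        k * n * phiStarR φ ((1 / ((n : ℝ) + k)) • (x - y)) := by
  have hkn : (0 : ℝ) < k * n := by positivity
  have H := hf.coe_le_phiStar hD hn hk hx hy
  rw [← coe_phiStarR (hf.phiStar_ne_bot hD hn hk hx hy), EReal.coe_le_coe_iff,
    div_le_iff₀' hkn] at H
  linarith

theorem to_phiStarR (hD : Convex ℝ D) (hf : JCW D φ f) : JCW D (phiStarR φ) f := by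
  intro x hx y hy
  have H := hf.apply_div_add_le_phiStarR hD one_pos one_pos hx hy
  norm_num at H
  rw [smul_add]
  simpa only [one_div] using H

end JCW

theorem admissible_phiStarR {D : Set X} (hD : Convex ℝ D) {φ : X → ℝ} (hφ : Admissible D φ) :
    Admissible D (phiStarR φ) := by
  obtain ⟨heven, hzero, g, hg⟩ := hφ
  refine ⟨fun u hu => ?_, ?_, g, hg.to_phiStarR hD⟩
  · rw [phiStarR, phiStarR, phiStar_neg hD heven hu]
  · rw [phiStarR, phiStar_zero hzero, EReal.toReal_zero]

theorem stmt12_general {X : Type*} [AddCommGroup X] [Module ℝ X] (D : Set X)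
    (hD : Convex ℝ D) (φ : X → ℝ) (hφ : Admissible D φ) :
    (∀ u ∈ halfDiff D, phiStar φ u ≠ ⊥) ∧
    (∀ f : X → ℝ, JCW D φ f → ∀ n k : ℕ, 0 < n → 0 < k → ∀ x ∈ D, ∀ y ∈ D,
      ((f (((n : ℝ) / ((n : ℝ) + (k : ℝ))) • x +
          ((k : ℝ) / ((n : ℝ) + (k : ℝ))) • y) : ℝ) : EReal) ≤
        (((n : ℝ) / ((n : ℝ) + (k : ℝ)) * f x +
          (k : ℝ) / ((n : ℝ) + (k : ℝ)) * f y : ℝ) : EReal) +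
        (((k : ℝ) * (n : ℝ) : ℝ) : EReal) *
          phiStar φ ((1 / ((n : ℝ) + (k : ℝ))) • (x - y))) ∧
    (∀ f : X → ℝ, JCW D φ f → JCW D (phiStarR φ) f) ∧
    Admissible D (phiStarR φ) := by
  obtain ⟨g, hg⟩ := hφ.2.2
  refine ⟨?_, fun f hf n k hn hk x hx y hy => ?_, fun f hf => hf.to_phiStarR hD,
    admissible_phiStarR hD hφ⟩
  · rintro u ⟨x, hx, y, hy, rfl⟩
    simpa [one_add_one_eq_two] using hg.phiStar_ne_bot hD one_pos one_pos hx hy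
  · rw [← coe_phiStarR (hf.phiStar_ne_bot hD hn hk hx hy), ← EReal.coe_mul, ← EReal.coe_add,
      EReal.coe_le_coe_iff]
    exact hf.apply_div_add_le_phiStarR hD hn hk hx hy

/-- the sharpened rational convexity inequality with `φ*`; in particular
`φ*` is real-valued on `(1/2)·D_Δ`, every `φ`-Jensen convex function is `φ*`-Jensen convex,
and `φ*` is an admissible error function. -/
theorem stmt12 {X : Type*} [AddCommGroup X] [Module ℝ X] (D : Set X)
    (hD : Convex ℝ D) (hne : D.Nonempty) (φ : X → ℝ) (hφ : Admissible D φ) :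
    (∀ u ∈ halfDiff D, phiStar φ u ≠ ⊥) ∧
    (∀ f : X → ℝ, JCW D φ f → ∀ n k : ℕ, 0 < n → 0 < k → ∀ x ∈ D, ∀ y ∈ D,
      ((f (((n : ℝ) / ((n : ℝ) + (k : ℝ))) • x +
          ((k : ℝ) / ((n : ℝ) + (k : ℝ))) • y) : ℝ) : EReal) ≤
        (((n : ℝ) / ((n : ℝ) + (k : ℝ)) * f x +
          (k : ℝ) / ((n : ℝ) + (k : ℝ)) * f y : ℝ) : EReal) +
        (((k : ℝ) * (n : ℝ) : ℝ) : EReal) *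
          phiStar φ ((1 / ((n : ℝ) + (k : ℝ))) • (x - y))) ∧
    (∀ f : X → ℝ, JCW D φ f → JCW D (phiStarR φ) f) ∧
    Admissible D (phiStarR φ) :=
  stmt12_general D hD φ hφ
end
end

section
/- Let φ be an admissible error function. Then for all positive integers n, k and all u ∈ D_Δ: E[φ](n/(n+k), u) ≤ n·k·φ*(u/(n+k)), where the inequality is understood in the extended reals. -/
noncomputable section

variable {X : Type*} [AddCommGroup X] [Module ℝ X]

/-! On the grid points `y + (i/N)(x - y)`, `i = 0, …, N`, a `φ`-Jensen convex function has second
differences at least `-2φ((x - y)/N)`; adding the quadratic `φ((x - y)/N)·i(N - i)` makes it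
midpoint convex, hence below its chord. With `N = (n + k)m` and `i = nm` this bounds the
Jensen gap at `λ = n/(n + k)` by `nk·m²·φ(u/((n + k)m))` for every `m ≥ 1`; the bound by
`nk·φ*(u/(n + k))` is the infimum over `m`. -/

lemma mul_le_chord_of_two_mul_le_add {h : ℕ → ℝ} {N : ℕ}
    (hh : ∀ i, i + 2 ≤ N → 2 * h (i + 1) ≤ h i + h (i + 2)) {j : ℕ} (hj : j ≤ N) :
    N * h j ≤ (N - j) * h 0 + j * h N := by
  set d : ℕ → ℝ := fun i => h (i + 1) - h i
  have hd : MonotoneOn d (Set.Iio N) := by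
    refine monotoneOn_of_le_succ Set.ordConnected_Iio fun i _ _ hi => ?_
    simp only [Order.succ_eq_add_one, Set.mem_Iio, d] at hi ⊢
    linarith [hh i (by omega)]
  have htele : ∀ p, h p = h 0 + ∑ i ∈ Finset.range p, d i := fun p => by
    rw [Finset.sum_range_sub]; ring
  have hkey : ((N : ℝ) - j) * ∑ i ∈ Finset.range j, d i ≤ j * ∑ l ∈ Finset.Ico j N, d l :=
    calc ((N : ℝ) - j) * ∑ i ∈ Finset.range j, d i
        = ∑ i ∈ Finset.range j, ∑ _l ∈ Finset.Ico j N, d i := by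
          simp [Finset.mul_sum, Nat.cast_sub hj]
      _ ≤ ∑ _i ∈ Finset.range j, ∑ l ∈ Finset.Ico j N, d l := by
          refine Finset.sum_le_sum fun i hi => Finset.sum_le_sum fun l hl => ?_
          simp only [Finset.mem_range, Finset.mem_Ico] at hi hl
          exact hd (by simp; omega) (by simpa using hl.2) (by omega)
      _ = j * ∑ l ∈ Finset.Ico j N, d l := by simp
  rw [htele j, htele N, ← Finset.sum_range_add_sum_Ico _ hj]
  nlinarith [hkey]

lemma mul_le_chord_add_of_two_mul_le_add {g : ℕ → ℝ} {N : ℕ} {c : ℝ}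
    (hg : ∀ i, i + 2 ≤ N → 2 * g (i + 1) ≤ g i + g (i + 2) + 2 * c) {j : ℕ} (hj : j ≤ N) :
    N * g j ≤ (N - j) * g 0 + j * g N + N * (j * (N - j) * c) := by
  have h := mul_le_chord_of_two_mul_le_add (h := fun i => g i - c * i * (N - i)) (fun i hi => by
    push_cast; nlinarith [hg i hi]) hj
  simp only [CharP.cast_eq_zero, sub_self] at h
  nlinarith [h]

variable {D : Set X} {φ f : X → ℝ}

lemma JCW.mul_le_chord_add (hf : JCW D φ f) (hD : Convex ℝ D) {x y : X} (hx : x ∈ D)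
    (hy : y ∈ D) {N j : ℕ} (hN : 0 < N) (hj : j ≤ N) :
    N * f (((j : ℝ) / N) • x + (1 - (j : ℝ) / N) • y)
      ≤ (N - j) * f y + j * f x + N * (j * (N - j) * φ ((1 / (N : ℝ)) • (x - y))) := by
  have hN0 : (N : ℝ) ≠ 0 := by positivity
  set p : ℕ → X := fun i => ((i : ℝ) / N) • x + (1 - (i : ℝ) / N) • y
  have hpD : ∀ i, i ≤ N → p i ∈ D := fun i hi => by
    refine hD hx hy (by positivity) ?_ (by ring)
    have : (i : ℝ) / N ≤ 1 := div_le_one_of_le₀ (by exact_mod_cast hi) (by positivity)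
    linarith
  have hstep : ∀ i, i + 2 ≤ N →
      2 * f (p (i + 1)) ≤ f (p i) + f (p (i + 2)) + 2 * φ ((1 / (N : ℝ)) • (x - y)) := by
    intro i hi
    have hmid : (2⁻¹ : ℝ) • (p (i + 2) + p i) = p (i + 1) := by
      simp only [p]; push_cast; match_scalars <;> field_simp <;> ring
    have hhalf : (2⁻¹ : ℝ) • (p (i + 2) - p i) = (1 / (N : ℝ)) • (x - y) := by
      simp only [p]; push_cast; match_scalars <;> field_simp <;> ring
    have := hf (p (i + 2)) (hpD _ hi) (p i) (hpD _ (by omega))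
    rw [hmid, hhalf] at this
    linarith
  have h := mul_le_chord_add_of_two_mul_le_add (g := fun i => f (p i)) hstep hj
  simpa [p, hN0] using h

lemma JCW.sub_le_mul_sq_mul (hf : JCW D φ f) (hD : Convex ℝ D) {x y : X} (hx : x ∈ D)
    (hy : y ∈ D) {n k m : ℕ} (hnk : 0 < n + k) (hm : 0 < m) :
    f (((n : ℝ) / (n + k)) • x + (1 - (n : ℝ) / (n + k)) • y)
        - (n : ℝ) / (n + k) * f x - (1 - (n : ℝ) / (n + k)) * f y
      ≤ n * k * ((m : ℝ) ^ 2 * φ ((1 / (m : ℝ)) • ((1 / ((n : ℝ) + k)) • (x - y)))) := by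
  have h := hf.mul_le_chord_add hD hx hy (N := (n + k) * m) (j := n * m)
    (Nat.mul_pos hnk hm) (Nat.mul_le_mul_right _ (Nat.le_add_right n k))
  have hA : (0 : ℝ) < n + k := by exact_mod_cast hnk
  have hl : ((n * m : ℕ) : ℝ) / ((n + k) * m : ℕ) = n / (n + k) := by
    push_cast; field_simp
  have harg : (1 / (((n + k) * m : ℕ) : ℝ)) • (x - y)
      = (1 / (m : ℝ)) • ((1 / ((n : ℝ) + k)) • (x - y)) := by
    rw [smul_smul]; push_cast; congr 1; field_simp
  rw [hl, harg] at h
  push_cast at h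
  have hpos : (0 : ℝ) < (n + k) * m := by positivity
  generalize f _ = F, f x = a, f y = b, φ _ = c at h ⊢
  rw [← sub_nonneg] at h ⊢
  calc (0 : ℝ) ≤ _ / ((n + k) * m) := div_nonneg h hpos.le
    _ = _ := by field_simp; ring

theorem stmt14_general {X : Type*} [AddCommGroup X] [Module ℝ X] (D : Set X)
    (hD : Convex ℝ D) (φ : X → ℝ)
    (n k : ℕ) (hn : 0 < n) (hk : 0 < k) (u : X) :
    Eerr D φ ((n : ℝ) / ((n : ℝ) + (k : ℝ))) u ≤
      (((n : ℝ) * (k : ℝ) : ℝ) : EReal) *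
        phiStar φ ((1 / ((n : ℝ) + (k : ℝ))) • u) := by
  have hnk : (0 : ℝ) < n * k := by positivity
  refine sSup_le ?_
  rintro c ⟨f, hf, x, hx, y, hy, rfl, rfl⟩
  rw [← EReal.div_le_iff_le_mul (by exact_mod_cast hnk) (EReal.coe_ne_top _), ← EReal.coe_div]
  refine le_iInf fun m => EReal.coe_le_coe_iff.mpr ?_
  rw [div_le_iff₀ hnk]
  exact (hf.sub_le_mul_sq_mul hD hx hy (n := n) (k := k) (by omega) m.pos).trans_eq (mul_comm _ _)

/-- `E[φ](n/(n+k), u) ≤ n·k·φ*(u/(n+k))` in the extended reals. -/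
theorem stmt14 {X : Type*} [AddCommGroup X] [Module ℝ X] (D : Set X)
    (hD : Convex ℝ D) (hne : D.Nonempty) (φ : X → ℝ) (hφ : Admissible D φ)
    (n k : ℕ) (hn : 0 < n) (hk : 0 < k) (u : X) (hu : u ∈ diffSet D) :
    Eerr D φ ((n : ℝ) / ((n : ℝ) + (k : ℝ))) u ≤
      (((n : ℝ) * (k : ℝ) : ℝ) : EReal) *
        phiStar φ ((1 / ((n : ℝ) + (k : ℝ))) • u) :=
  stmt14_general D hD φ n k hn hk u
end
end

section
/- Let φ be an admissible error function. Then for every irrational λ ∈ [0,1] and every u ∈ D_Δ with u ≠ 0, E[φ](λ, u) = +∞. -/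
noncomputable section

variable {X : Type*} [AddCommGroup X] [Module ℝ X]

/-!
Adding a `ℚ`-additive function `h` to a `φ`-Jensen convex function keeps it `φ`-Jensen convex,
since `h` satisfies Jensen's equation exactly. When `λ` is irrational, `u` and `λ • u` are
`ℚ`-linearly independent, so `h` can be chosen with `h u = 0` and `h (λ • u)` arbitrary, and
this shifts the convexity gap at a pair `x, y` with `x - y = u` by an arbitrary amount.
-/

theorem exists_linearMap_map_eq_zero_map_eq_of_notMem_span_singleton {K V W : Type*} [Field K]
    [AddCommGroup V] [Module K V] [AddCommGroup W] [Module K W] {x y : V}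
    (hx : x ∉ K ∙ y) (w : W) : ∃ g : V →ₗ[K] W, g y = 0 ∧ g x = w := by
  obtain ⟨f, hfx, hfy⟩ := Submodule.exists_dual_map_eq_bot_of_notMem hx inferInstance
  refine ⟨((f x)⁻¹ • f).smulRight w, ?_, ?_⟩
  · have hfy' : f y ∈ (K ∙ y).map f :=
      Submodule.mem_map_of_mem (Submodule.mem_span_singleton_self y)
    rw [hfy, Submodule.mem_bot] at hfy'
    simp [hfy']
  · simp [hfx]

theorem Irrational.exists_ratLinearMap_map_one_eq_zero {l : ℝ} (hl : Irrational l) (s : ℝ) :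
    ∃ g : ℝ →ₗ[ℚ] ℝ, g 1 = 0 ∧ g l = s := by
  refine exists_linearMap_map_eq_zero_map_eq_of_notMem_span_singleton (fun hmem => ?_) s
  obtain ⟨q, hq⟩ := Submodule.mem_span_singleton.mp hmem
  exact hl ⟨q, by simpa [Rat.smul_def] using hq⟩

theorem Irrational.exists_addMonoidHom_map_eq_zero_map_smul_eq {l : ℝ} (hl : Irrational l) {u : X} (hu : u ≠ 0)
    (s : ℝ) : ∃ h : X →+ ℝ, h u = 0 ∧ h (l • u) = s := by
  obtain ⟨ψ, -, hψu⟩ := exists_linearMap_map_eq_zero_map_eq_of_notMem_span_singleton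
    (K := ℝ) (y := (0 : X)) (by simpa using hu) (1 : ℝ)
  obtain ⟨g, hg1, hgl⟩ := hl.exists_ratLinearMap_map_one_eq_zero s
  exact ⟨g.toAddMonoidHom.comp ψ.toAddMonoidHom, by simp [hψu, hg1], by simp [hψu, hgl]⟩

theorem AddMonoidHom.map_inv_two_smul (h : X →+ ℝ) (v : X) :
    h ((2⁻¹ : ℝ) • v) = 2⁻¹ * h v := by
  have hsplit : h v = h ((2⁻¹ : ℝ) • v) + h ((2⁻¹ : ℝ) • v) := by
    rw [← map_add, ← add_smul]; norm_num
  linarith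

theorem AddMonoidHom.map_convexCombination_sub (h : X →+ ℝ) (l : ℝ) (x y : X) :
    h (l • x + (1 - l) • y) - l * h x - (1 - l) * h y = h (l • (x - y)) - l * h (x - y) := by
  have hcomb : l • x + (1 - l) • y = y + l • (x - y) := by
    rw [smul_sub, sub_smul, one_smul]; abel
  rw [hcomb, map_add, map_sub]
  ring

theorem JCW.add_addMonoidHom {D : Set X} {φ f : X → ℝ} (hf : JCW D φ f) (h : X →+ ℝ) :
    JCW D φ (f + h) := by
  intro x hx y hy
  have hJensen := hf x hx y hy
  simp only [Pi.add_apply, h.map_inv_two_smul, map_add]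
  linarith

theorem stmt15_general {X : Type*} [AddCommGroup X] [Module ℝ X] (D : Set X)
    (φ : X → ℝ) (hφ : Admissible D φ)
    (l : ℝ) (hirr : Irrational l)
    (u : X) (hu : u ∈ diffSet D) (hu0 : u ≠ 0) :
    Eerr D φ l u = ⊤ := by
  obtain ⟨-, -, f, hf⟩ := hφ
  obtain ⟨x, hx, y, hy, rfl⟩ := hu
  rw [Eerr, sSup_eq_top]
  intro b hb
  obtain ⟨t, hbt, -⟩ := EReal.exists_between_coe_real hb
  obtain ⟨h, hhu, hhlu⟩ := hirr.exists_addMonoidHom_map_eq_zero_map_smul_eq hu0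
    (t - (f (l • x + (1 - l) • y) - l * f x - (1 - l) * f y))
  refine ⟨t, ⟨f + h, hf.add_addMonoidHom h, x, hx, y, hy, rfl, ?_⟩, hbt⟩
  have hgap := h.map_convexCombination_sub l x y
  simp only [Pi.add_apply, hhu, hhlu] at hgap ⊢
  norm_cast
  linarith

/-- for irrational `λ ∈ [0,1]` and `u ∈ D_Δ \ {0}`, `E[φ](λ,u) = +∞`. -/
theorem stmt15 {X : Type*} [AddCommGroup X] [Module ℝ X] (D : Set X)
    (hD : Convex ℝ D) (hne : D.Nonempty) (φ : X → ℝ) (hφ : Admissible D φ)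
    (l : ℝ) (hl : l ∈ Set.Icc (0 : ℝ) 1) (hirr : Irrational l)
    (u : X) (hu : u ∈ diffSet D) (hu0 : u ≠ 0) :
    Eerr D φ l u = ⊤ :=
  stmt15_general D φ hφ l hirr u hu hu0
end
end

section
/- Let φ be an admissible error function. Then for all λ, μ ∈ [0,1] and all u ∈ D_Δ: E[φ](λ·μ, u) ≤ λ·E[φ](μ, u) + E[φ](λ, μ·u), where the inequality and the operations on the right-hand side are understood in the extended reals (−∞, ∞]. -/
noncomputable section

variable {X : Type*} [AddCommGroup X] [Module ℝ X]

/-- submultiplicativity-type inequality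
`E[φ](λμ, u) ≤ λ·E[φ](μ, u) + E[φ](λ, μu)` in the extended reals. -/
theorem stmt16 {X : Type*} [AddCommGroup X] [Module ℝ X] (D : Set X)
    (hD : Convex ℝ D) (hne : D.Nonempty) (φ : X → ℝ) (hφ : Admissible D φ)
    (l μ : ℝ) (hl : l ∈ Set.Icc (0 : ℝ) 1) (hμ : μ ∈ Set.Icc (0 : ℝ) 1)
    (u : X) (hu : u ∈ diffSet D) :
    Eerr D φ (l * μ) u ≤ (l : EReal) * Eerr D φ μ u + Eerr D φ l (μ • u) := by
  apply sSup_le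
  rintro c ⟨f, hf, x, hx, y, hy, hxy, rfl⟩
  set z := μ • x + (1 - μ) • y with hz
  have hzD : z ∈ D := hD hx hy hμ.1 (by linarith [hμ.2]) (by ring)
  have hzy : z - y = μ • u := by rw [hz, ← hxy]; module
  have ha : ((f z - μ * f x - (1 - μ) * f y : ℝ) : EReal) ≤ Eerr D φ μ u :=
    le_sSup ⟨f, hf, x, hx, y, hy, hxy, rfl⟩
  have hb : ((f (l • z + (1 - l) • y) - l * f z - (1 - l) * f y : ℝ) : EReal)
      ≤ Eerr D φ l (μ • u) :=
    le_sSup ⟨f, hf, z, hzD, y, hy, hzy, rfl⟩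
  have hpt : (l * μ) • x + (1 - l * μ) • y = l • z + (1 - l) • y := by rw [hz]; module
  have key : (f ((l * μ) • x + (1 - l * μ) • y) - l * μ * f x - (1 - l * μ) * f y : ℝ)
      = l * (f z - μ * f x - (1 - μ) * f y)
        + (f (l • z + (1 - l) • y) - l * f z - (1 - l) * f y) := by
    rw [hpt]; ring
  rw [key]
  push_cast
  exact add_le_add (mul_le_mul_of_nonneg_left ha (by exact_mod_cast hl.1)) hb
end
end

section
/- Let φ be an admissible error function. Then φ* is a (real-valued) admissible error function and E[φ](λ, u) = E[φ*](λ, u) for all λ ∈ [0,1] and u ∈ D_Δ. -/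
noncomputable section

variable {X : Type*} [AddCommGroup X] [Module ℝ X]

/- ### Auxiliary lemmas -/

lemma max_principle (n : ℕ) (b : ℕ → ℝ)
    (hconv : ∀ i, i + 2 ≤ n → b (i+1) ≤ 2⁻¹ * b i + 2⁻¹ * b (i+2))
    (h0 : b 0 ≤ 0) (hn : b n ≤ 0) : ∀ i, i ≤ n → b i ≤ 0 := by
  classical
  have hne : (Finset.range (n+1)).Nonempty := ⟨0, by simp⟩
  set M := (Finset.range (n+1)).sup' hne b with hM
  have hle : ∀ i, i ≤ n → b i ≤ M := fun i hi =>
    Finset.le_sup' b (Finset.mem_range.mpr (by omega))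
  suffices hM0 : M ≤ 0 by exact fun i hi => (hle i hi).trans hM0
  set T := (Finset.range (n+1)).filter (fun i => M ≤ b i) with hT
  have hTne : T.Nonempty := by
    obtain ⟨j, hj, hj'⟩ := Finset.exists_mem_eq_sup' hne b
    exact ⟨j, Finset.mem_filter.mpr ⟨hj, hj'.le⟩⟩
  have hjT := T.max'_mem hTne
  set j := T.max' hTne with hj
  rw [hT, Finset.mem_filter, Finset.mem_range] at hjT
  obtain ⟨hjn, hjb⟩ := hjT
  by_cases hj0 : j = 0
  · rw [hj0] at hjb; linarith
  by_cases hjn' : j = n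
  · rw [hjn'] at hjb; linarith
  · have h2 : (j-1) + 2 ≤ n := by omega
    have hc := hconv (j-1) h2
    have e1 : j - 1 + 1 = j := by omega
    have e2 : j - 1 + 2 = j + 1 := by omega
    rw [e1, e2] at hc
    have hbj1 : M ≤ b (j+1) := by
      have h3 : b (j-1) ≤ M := hle _ (by omega)
      linarith
    have hmem : j + 1 ∈ T := by
      rw [hT, Finset.mem_filter, Finset.mem_range]
      exact ⟨by omega, hbj1⟩
    have := T.le_max' _ hmem
    omega

lemma zmem {D : Set X} (hD : Convex ℝ D) {x y : X} (hx : x ∈ D) (hy : y ∈ D)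
    {t : ℝ} (h0 : 0 ≤ t) (h1 : t ≤ 1) : x + t • (y - x) ∈ D := by
  have h := hD hx hy (by linarith : (0:ℝ) ≤ 1 - t) h0 (by ring)
  convert h using 1
  module

lemma keyA {D : Set X} (hD : Convex ℝ D) {φ f : X → ℝ} (hf : JCW D φ f) (m : ℕ+) :
    JCW D (fun u => ((m:ℕ):ℝ)^2 * φ ((1 / ((m:ℕ):ℝ)) • u)) f := by
  intro x hx y hy
  set n : ℕ := 2 * (m:ℕ) with hn
  have hm0 : (0:ℝ) < ((m:ℕ):ℝ) := by exact_mod_cast m.pos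
  have hcast : ((n:ℕ):ℝ) = 2 * ((m:ℕ):ℝ) := by rw [hn]; push_cast; ring
  have hN0 : (0:ℝ) < ((n:ℕ):ℝ) := by rw [hcast]; linarith
  set z : ℕ → X := fun i => x + (((i:ℕ):ℝ)/((n:ℕ):ℝ)) • (y - x) with hz
  have hzD : ∀ i, i ≤ n → z i ∈ D := by
    intro i hi
    refine zmem hD hx hy (by positivity) ?_
    rw [div_le_one hN0]
    exact_mod_cast hi
  set c : ℝ := φ ((1/((n:ℕ):ℝ)) • (x - y)) with hc
  have hstep : ∀ i, i + 2 ≤ n → f (z (i+1)) ≤ 2⁻¹ * f (z i) + 2⁻¹ * f (z (i+2)) + c := by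
    intro i hi
    have h := hf (z i) (hzD i (by omega)) (z (i+2)) (hzD (i+2) hi)
    have e1 : (2⁻¹:ℝ) • (z i + z (i+2)) = z (i+1) := by
      simp only [hz]; push_cast; module
    have e2 : (2⁻¹:ℝ) • (z i - z (i+2)) = (1/((n:ℕ):ℝ)) • (x - y) := by
      simp only [hz]; push_cast; module
    rw [e1, e2] at h
    exact h
  set b : ℕ → ℝ := fun i => f (z i) - f (z 0) - (((i:ℕ):ℝ)/((n:ℕ):ℝ)) * (f (z n) - f (z 0))
      - c * ((i:ℕ):ℝ) * (((n:ℕ):ℝ) - ((i:ℕ):ℝ)) with hbdef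
  have hbconv : ∀ i, i + 2 ≤ n → b (i+1) ≤ 2⁻¹ * b i + 2⁻¹ * b (i+2) := by
    intro i hi
    have h := hstep i hi
    have key : b (i+1) - 2⁻¹ * b i - 2⁻¹ * b (i+2)
        = f (z (i+1)) - 2⁻¹ * f (z i) - 2⁻¹ * f (z (i+2)) - c := by
      simp only [hbdef]; push_cast; ring
    linarith
  have hb0 : b 0 ≤ 0 := by simp [hbdef]
  have hbn : b n ≤ 0 := by
    have h : b n = 0 := by
      simp only [hbdef, div_self hN0.ne', sub_self, mul_zero]
      ring
    linarith
  have hbm := max_principle n b hbconv hb0 hbn (m:ℕ) (by omega)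
  have hmn : (((m:ℕ):ℕ):ℝ)/((n:ℕ):ℝ) = 2⁻¹ := by
    rw [hcast]; field_simp
  have hzm : z (m:ℕ) = (2⁻¹:ℝ) • (x + y) := by
    simp only [hz, hmn]; module
  have hz0 : z 0 = x := by simp [hz]
  have hzn : z n = y := by
    simp only [hz, div_self hN0.ne']; module
  have harg : (1 / ((m:ℕ):ℝ)) • ((2⁻¹:ℝ) • (x - y)) = (1/((n:ℕ):ℝ)) • (x - y) := by
    rw [smul_smul, hcast]
    congr 1
    field_simp
  show f ((2⁻¹:ℝ) • (x + y)) ≤ 2⁻¹ * f x + 2⁻¹ * f y + ((m:ℕ):ℝ)^2 * φ ((1 / ((m:ℕ):ℝ)) • ((2⁻¹:ℝ) • (x - y)))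
  rw [harg, ← hc]
  simp only [hbdef, hz0, hzn, hzm, hmn] at hbm
  rw [hcast] at hbm
  ring_nf at hbm ⊢
  linarith

lemma phiStar_le_self (φ : X → ℝ) (u : X) : phiStar φ u ≤ ((φ u : ℝ) : EReal) := by
  have h : phiStar φ u ≤ ((((1:ℕ+):ℕ):ℝ)^2 * φ ((1 / (((1:ℕ+):ℕ):ℝ)) • u) : ℝ) := iInf_le _ 1
  simpa using h

lemma phiStar_ne_bot_ne_top {φ : X → ℝ} {u : X} {C : ℝ}
    (h : ∀ m : ℕ+, C ≤ ((m:ℕ):ℝ)^2 * φ ((1 / ((m:ℕ):ℝ)) • u)) :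
    phiStar φ u = ((phiStarR φ u : ℝ) : EReal) ∧ ((C:ℝ):EReal) ≤ phiStar φ u := by
  have hlb : ((C:ℝ):EReal) ≤ phiStar φ u := le_iInf fun m => EReal.coe_le_coe_iff.mpr (h m)
  have hb : phiStar φ u ≠ ⊥ := ((EReal.bot_lt_coe C).trans_le hlb).ne'
  have ht : phiStar φ u ≠ ⊤ := ne_top_of_le_ne_top (EReal.coe_ne_top _) (phiStar_le_self φ u)
  exact ⟨(EReal.coe_toReal ht hb).symm, hlb⟩

/-- Combined spec: finiteness, `φ* ≤ φ`, and the `φ*`-Jensen inequality for any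
`φ`-Jensen convex function, at a point of the half difference set. -/
lemma phiStarR_spec {D : Set X} (hD : Convex ℝ D) {φ f0 : X → ℝ} (hf0 : JCW D φ f0)
    {x y : X} (hx : x ∈ D) (hy : y ∈ D) :
    phiStar φ ((2⁻¹:ℝ) • (x - y)) = ((phiStarR φ ((2⁻¹:ℝ) • (x - y)) : ℝ) : EReal) ∧
    phiStarR φ ((2⁻¹:ℝ) • (x - y)) ≤ φ ((2⁻¹:ℝ) • (x - y)) ∧
    f0 ((2⁻¹:ℝ) • (x + y)) ≤ 2⁻¹ * f0 x + 2⁻¹ * f0 y + phiStarR φ ((2⁻¹:ℝ) • (x - y)) := by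
  set u := (2⁻¹:ℝ) • (x - y) with hu
  set C : ℝ := f0 ((2⁻¹:ℝ) • (x + y)) - 2⁻¹ * f0 x - 2⁻¹ * f0 y with hC
  have hCle : ∀ m : ℕ+, C ≤ ((m:ℕ):ℝ)^2 * φ ((1 / ((m:ℕ):ℝ)) • u) := by
    intro m
    have h := keyA hD hf0 m x hx y hy
    simp only [hC, hu]
    linarith
  obtain ⟨heq, hlb⟩ := phiStar_ne_bot_ne_top hCle
  have h2 : phiStarR φ u ≤ φ u := by
    have := phiStar_le_self φ u
    rw [heq] at this
    exact_mod_cast this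
  have h3 : C ≤ phiStarR φ u := by
    rw [heq] at hlb
    exact_mod_cast hlb
  exact ⟨heq, h2, by rw [hC] at h3; linarith⟩

/-- `φ*` is a real-valued admissible error function and `E[φ] = E[φ*]`. -/
theorem stmt18 {X : Type*} [AddCommGroup X] [Module ℝ X] (D : Set X)
    (hD : Convex ℝ D) (hne : D.Nonempty) (φ : X → ℝ) (hφ : Admissible D φ) :
    (∀ u ∈ halfDiff D, phiStar φ u ≠ ⊥) ∧
    Admissible D (phiStarR φ) ∧
    (∀ l ∈ Set.Icc (0 : ℝ) 1, ∀ u ∈ diffSet D,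
      Eerr D φ l u = Eerr D (phiStarR φ) l u) := by
  obtain ⟨heven, hzero, f0, hf0⟩ := hφ
  -- the JCW equivalence
  have hjcw : ∀ f : X → ℝ, JCW D φ f ↔ JCW D (phiStarR φ) f := by
    intro f
    constructor
    · intro hf x hx y hy
      exact (phiStarR_spec hD hf hx hy).2.2
    · intro hf x hx y hy
      have h1 := hf x hx y hy
      have h2 := (phiStarR_spec hD hf0 hx hy).2.1
      linarith
  refine ⟨?_, ⟨?_, ?_, f0, (hjcw f0).mp hf0⟩, ?_⟩
  · -- not ⊥ on halfDiff
    rintro u ⟨x, hx, y, hy, rfl⟩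
    have heq := (phiStarR_spec hD hf0 hx hy).1
    rw [heq]
    exact EReal.coe_ne_bot _
  · -- evenness
    rintro u ⟨x, hx, y, hy, rfl⟩
    unfold phiStarR
    congr 1
    unfold phiStar
    apply iInf_congr
    intro m
    have hm0 : (0:ℝ) < ((m:ℕ):ℝ) := by exact_mod_cast m.pos
    have hm1 : (1:ℝ) ≤ ((m:ℕ):ℝ) := by exact_mod_cast m.one_le
    have hmem : (1 / ((m:ℕ):ℝ)) • ((2⁻¹:ℝ) • (x - y)) ∈ halfDiff D := by
      refine ⟨(1/((m:ℕ):ℝ)) • x + (1 - 1/((m:ℕ):ℝ)) • y, ?_, y, hy, ?_⟩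
      · exact hD hx hy (by positivity) (by rw [sub_nonneg, div_le_one hm0]; exact hm1) (by ring)
      · module
    have he := heven _ hmem
    rw [show (1 / ((m:ℕ):ℝ)) • -((2⁻¹:ℝ) • (x - y)) = -((1 / ((m:ℕ):ℝ)) • (2⁻¹:ℝ) • (x - y)) from smul_neg _ _, he]
  · -- vanishing at 0
    unfold phiStarR phiStar
    simp only [smul_zero, hzero, mul_zero]
    rw [iInf_const]
    simp
  · -- Eerr equality
    intro l _ u _
    unfold Eerr
    congr 1
    ext c
    simp only [Set.mem_setOf_eq]
    constructor
    · rintro ⟨f, hf, rest⟩; exact ⟨f, (hjcw f).mp hf, rest⟩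
    · rintro ⟨f, hf, rest⟩; exact ⟨f, (hjcw f).mpr hf, rest⟩
end
end
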